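/- Let (L, R) be a modality in a category E with finite limits. A map u : A → B is a fiberwise R-equivalence (every base change u' of u induces an equivalence of categories (u')* : R[B'] → R[A']) if and only if both u and its diagonal Δ(u) belong to L. -/

import Mathlib

/-!
Write `u* : E/B ⥤ E/A` for base change and `u_! ⊣ u*` for its left adjoint, and call a map of
`E/B` local when precomposition with it is bijective on maps into objects of `R[B]`. A map
`l : A ⟶ B` is in `L` exactly when `l ⟶ 𝟙 B` is local, and `u*` is fully faithful on `R[B]`
exactly when the counits `u_! u* Y ⟶ Y` (`Y ∈ R[B]`) are local. The counit at `𝟙 B` is `u`,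
so an `R`-equivalence lies in `L`. For `Δ(u)`, a section of the base change
`v : A ×_B A ⟶ A`, essential surjectivity of `v*` transports the locality of `v` to `Δ(u)`
through `v_! ⊣ v*`. Conversely, if `u ∈ L` the counits are base changes of `u`; and for
`X ∈ R[A]`, factoring `X ⟶ A ⟶ B` as `l ≫ r`, the comparison map `X ⟶ u* r` lies in `R` by
cancellation and in `L` because `Δ(u) ∈ L`, so it is invertible. Both conditions on `u` are
stable under base change since `L` is.
-/

open CategoryTheory CategoryTheory.Limits

universe w v u

namespace Paper

variable {E : Type u} [Category.{v} E]

/-- `u` is left orthogonal to `f`: every commutative square from `u` to `f` admits a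
unique diagonal filler. -/
def Orth {A B X Y : E} (u : A ⟶ B) (f : X ⟶ Y) : Prop :=
  ∀ (x : A ⟶ X) (y : B ⟶ Y), x ≫ f = u ≫ y → ∃! d : B ⟶ X, u ≫ d = x ∧ d ≫ f = y

/-- A factorization system `(L, R)`: two replete classes of maps with `L` orthogonal to
`R`, such that every map factors as a map in `L` followed by a map in `R`. -/
structure FactorizationSystem (E : Type u) [Category.{v} E] where
  /-- the left class -/
  L : MorphismProperty E
  /-- the right class -/
  R : MorphismProperty E
  replete_L : ∀ ⦃X Y X' Y' : E⦄ (f : X ⟶ Y) (f' : X' ⟶ Y'),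
    (Arrow.mk f ≅ Arrow.mk f') → L f → L f'
  replete_R : ∀ ⦃X Y X' Y' : E⦄ (f : X ⟶ Y) (f' : X' ⟶ Y'),
    (Arrow.mk f ≅ Arrow.mk f') → R f → R f'
  orth : ∀ ⦃A B X Y : E⦄ (u : A ⟶ B) (f : X ⟶ Y), L u → R f → Orth u f
  fac : ∀ ⦃X Y : E⦄ (f : X ⟶ Y), ∃ (Z : E) (l : X ⟶ Z) (r : Z ⟶ Y),
    L l ∧ R r ∧ l ≫ r = f

/-- `P` is stable under base change: any pullback of a map in `P` is in `P`. -/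
def StableUnderBaseChange' (P : MorphismProperty E) : Prop :=
  ∀ ⦃W X Y Z : E⦄ (fst : W ⟶ X) (snd : W ⟶ Y) (f : X ⟶ Z) (g : Y ⟶ Z),
    IsPullback fst snd f g → P f → P snd

namespace Orth

variable {A B C X Y Z : E}

lemma hom_ext {u : A ⟶ B} {f : X ⟶ Y} (h : Orth u f) {d₁ d₂ : B ⟶ X}
    (hu : u ≫ d₁ = u ≫ d₂) (hf : d₁ ≫ f = d₂ ≫ f) : d₁ = d₂ :=
  (h (u ≫ d₁) (d₁ ≫ f) (Category.assoc _ _ _)).unique ⟨rfl, rfl⟩ ⟨hu.symm, hf.symm⟩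

lemma of_isIso_left (u : A ⟶ B) [IsIso u] (f : X ⟶ Y) : Orth u f := by
  intro x y h
  refine ⟨inv u ≫ x, ⟨by simp, by simp [h]⟩, fun d hd => ?_⟩
  simp [← hd.1]

lemma of_isIso_right (u : A ⟶ B) (f : X ⟶ Y) [IsIso f] : Orth u f := by
  intro x y h
  refine ⟨y ≫ inv f, ⟨by simp [← reassoc_of% h], by simp⟩, fun d hd => ?_⟩
  simp [← hd.2]

lemma comp_left {u : A ⟶ B} {v : B ⟶ C} {f : X ⟶ Y} (hu : Orth u f) (hv : Orth v f) :
    Orth (u ≫ v) f := by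
  intro x y h
  obtain ⟨d₁, ⟨hd₁, hd₁'⟩, -⟩ := hu x (v ≫ y) (by simp [h])
  obtain ⟨d₂, ⟨hd₂, hd₂'⟩, -⟩ := hv d₁ y hd₁'
  refine ⟨d₂, ⟨by simp [hd₂, hd₁], hd₂'⟩, fun d hd => hv.hom_ext ?_ (hd.2.trans hd₂'.symm)⟩
  exact hu.hom_ext (by simpa [hd₂, hd₁] using hd.1) (by simp [hd.2, hd₂'])

lemma of_isPullback {l : A ⟶ B} {fst : Z ⟶ X} {snd : Z ⟶ C} {f : X ⟶ Y} {g : C ⟶ Y}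
    (pb : IsPullback fst snd f g) (h : Orth l f) : Orth l snd := by
  intro x y hxy
  obtain ⟨e, ⟨he₁, he₂⟩, -⟩ := h (x ≫ fst) (y ≫ g) (by simp [pb.w, reassoc_of% hxy])
  refine ⟨pb.lift e y he₂, ⟨pb.hom_ext (by simp [he₁]) (by simp [hxy]), by simp⟩,
    fun d hd => pb.hom_ext ?_ (by simp [hd.2])⟩
  exact h.hom_ext (by simp [reassoc_of% hd.1, he₁]) (by simp [pb.w, reassoc_of% hd.2, he₂])

lemma of_comp_right {l : A ⟶ B} {f : X ⟶ Y} {g : Y ⟶ Z} (hg : Orth l g)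
    (hfg : Orth l (f ≫ g)) : Orth l f := by
  intro x y hxy
  obtain ⟨d, ⟨hd₁, hd₂⟩, -⟩ := hfg x (y ≫ g) (by simp [reassoc_of% hxy])
  have hdf : d ≫ f = y :=
    hg.hom_ext (by simp [reassoc_of% hd₁, hxy]) (by simpa using hd₂)
  exact ⟨d, ⟨hd₁, hdf⟩, fun d' hd' => hfg.hom_ext (hd'.1.trans hd₁.symm)
    (by simp [reassoc_of% hd'.2, reassoc_of% hdf])⟩

end Orth

namespace FactorizationSystem

variable (S : FactorizationSystem E)

instance : S.L.RespectsIso :=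
  .of_respects_arrow_iso _ fun f g e hf => S.replete_L f.hom g.hom e hf

instance : S.R.RespectsIso :=
  .of_respects_arrow_iso _ fun f g e hf => S.replete_R f.hom g.hom e hf

lemma mem_L_of_orth {A B : E} {u : A ⟶ B} (h : ∀ ⦃X Y : E⦄ (r : X ⟶ Y), S.R r → Orth u r) :
    S.L u := by
  obtain ⟨Z, l, r, hl, hr, rfl⟩ := S.fac u
  obtain ⟨d, ⟨hd₁, hd₂⟩, -⟩ := h r hr l (𝟙 B) (by simp)
  have : IsIso r := ⟨d, (S.orth l r hl hr).hom_ext (by simpa using hd₁) (by simp [hd₂]), hd₂⟩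
  exact (S.L.cancel_right_of_respectsIso l r).2 hl

lemma mem_R_of_orth {X Y : E} {f : X ⟶ Y} (h : ∀ ⦃A B : E⦄ (l : A ⟶ B), S.L l → Orth l f) :
    S.R f := by
  obtain ⟨Z, l, r, hl, hr, rfl⟩ := S.fac f
  obtain ⟨d, ⟨hd₁, hd₂⟩, -⟩ := h l hl (𝟙 X) r (by simp)
  have : IsIso l :=
    ⟨d, hd₁, (S.orth l r hl hr).hom_ext (by simp [reassoc_of% hd₁]) (by simp [hd₂])⟩
  exact (S.R.cancel_left_of_respectsIso l r).2 hr

instance : S.L.IsMultiplicative where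
  id_mem _ := S.mem_L_of_orth fun _ _ r _ => .of_isIso_left _ r
  comp_mem _ _ hu hv :=
    S.mem_L_of_orth fun _ _ r hr => (S.orth _ r hu hr).comp_left (S.orth _ r hv hr)

instance : S.R.ContainsIdentities where
  id_mem _ := S.mem_R_of_orth fun _ _ l _ => .of_isIso_right l _

instance : S.R.IsStableUnderBaseChange where
  of_isPullback pb hg := S.mem_R_of_orth fun _ _ l hl => (S.orth l _ hl hg).of_isPullback pb

instance : S.R.HasOfPostcompProperty S.R where
  of_postcomp _ _ hg hfg := S.mem_R_of_orth fun _ _ l hl =>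
    (S.orth l _ hl hg).of_comp_right (S.orth l _ hl hfg)

lemma isIso_of_mem_L_of_mem_R {X Y : E} {f : X ⟶ Y} (hL : S.L f) (hR : S.R f) : IsIso f := by
  obtain ⟨d, ⟨hd₁, hd₂⟩, -⟩ := S.orth f f hL hR (𝟙 X) (𝟙 Y) (by simp)
  exact ⟨d, hd₁, hd₂⟩

/-- `R[B]`, as a property of objects of `E/B`. -/
def rSlice (B : E) : ObjectProperty (Over B) := fun Y => S.R Y.hom

lemma isLocal_rSlice_of_mem_L {B : E} {X Y : Over B} {m : X ⟶ Y} (hm : S.L m.left) :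
    (S.rSlice B).isLocal m := by
  intro P hP
  constructor
  · intro s₁ s₂ h
    exact Over.OverMorphism.ext <| (S.orth _ _ hm hP).hom_ext
      (by simpa using congrArg CommaMorphism.left h) (by simp)
  · intro ψ
    obtain ⟨d, ⟨hd₁, hd₂⟩, -⟩ := S.orth _ _ hm hP ψ.left Y.hom (by simp)
    exact ⟨Over.homMk d hd₂, Over.OverMorphism.ext (by simpa using hd₁)⟩

end FactorizationSystem

end Paper

namespace CategoryTheory

lemma Iso.bijective_precomp_iff {C : Type*} [Category C] {X Y Z Z' : C} (e : Z ≅ Z')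
    (m : X ⟶ Y) :
    Function.Bijective (fun s : Y ⟶ Z => m ≫ s) ↔
      Function.Bijective (fun s : Y ⟶ Z' => m ≫ s) := by
  have : (fun s : Y ⟶ Z' => m ≫ s) =
      Iso.homCongr (Iso.refl X) e ∘ (fun s : Y ⟶ Z => m ≫ s) ∘
        (Iso.homCongr (Iso.refl Y) e).symm := by
    ext s; simp
  rw [this, Equiv.comp_bijective, Equiv.bijective_comp]

namespace Adjunction

variable {C D : Type*} [Category C] [Category D] {F : C ⥤ D} {G : D ⥤ C}

lemma bijective_map_iff_bijective_counit_comp (adj : F ⊣ G) (Y Y' : D) :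
    Function.Bijective (fun φ : Y ⟶ Y' => G.map φ) ↔
      Function.Bijective (fun φ : Y ⟶ Y' => adj.counit.app Y ≫ φ) := by
  have : (fun φ : Y ⟶ Y' => G.map φ) = adj.homEquiv _ _ ∘ fun φ => adj.counit.app Y ≫ φ := by
    ext φ; simp [homEquiv_unit]
  rw [this]
  exact Equiv.comp_bijective _ _

lemma bijective_comp_iff_bijective_map_comp (adj : F ⊣ G) {X X' : C} (m : X ⟶ X') (Q : D) :
    Function.Bijective (fun s : X' ⟶ G.obj Q => m ≫ s) ↔
      Function.Bijective (fun s : F.obj X' ⟶ Q => F.map m ≫ s) := by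
  have : (fun s : X' ⟶ G.obj Q => m ≫ s) =
      adj.homEquiv _ _ ∘ (fun s => F.map m ≫ s) ∘ (adj.homEquiv _ _).symm := by
    ext s
    simp only [Function.comp_apply, ← homEquiv_naturality_left_symm, Equiv.apply_symm_apply]
  rw [this, Equiv.comp_bijective, Equiv.bijective_comp]

end Adjunction

end CategoryTheory

namespace Paper

universe v₂ u₂
variable {E : Type u} [Category.{v} E]

variable [HasFiniteLimits E]

/-- `u : A ⟶ B` is an `R`-equivalence: the base change functor `u* : R[B] ⥤ R[A]` is an
equivalence of categories.  Since `R[B]` is a full subcategory of `E/B`, this is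
expressed as: `u*` is fully faithful (pointwise bijectivity on hom-sets between objects
with structure map in `R`) and essentially surjective onto `R[A]`. -/
def IsREquiv (S : FactorizationSystem E) {A B : E} (u : A ⟶ B) : Prop :=
  (∀ (Y Y' : Over B), S.R Y.hom → S.R Y'.hom →
    Function.Bijective (fun φ : Y ⟶ Y' => (Over.pullback u).map φ)) ∧
  (∀ X : Over A, S.R X.hom →
    ∃ Y : Over B, S.R Y.hom ∧ Nonempty ((Over.pullback u).obj Y ≅ X))


namespace FactorizationSystem

variable (S : FactorizationSystem E)

lemma mem_L_of_isLocal_homMk {A B : E} {l : A ⟶ B}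
    (h : (S.rSlice B).isLocal (Over.homMk l : Over.mk l ⟶ Over.mk (𝟙 B))) : S.L l := by
  refine S.mem_L_of_orth fun X Y f hf x y hxy => ?_
  -- Lifts against `f` with bottom `y` are sections of its base change along `y`.
  have hP : S.rSlice B (Over.mk (pullback.fst y f)) := S.R.pullback_fst y f hf
  obtain ⟨s, hs⟩ :=
    (h _ hP).2 (Over.homMk (pullback.lift l x hxy.symm) (pullback.lift_fst _ _ _))
  have hls : l ≫ s.left = pullback.lift l x hxy.symm := by
    simpa using congrArg CommaMorphism.left hs
  have hsf : s.left ≫ pullback.fst y f = 𝟙 B := by simpa using Over.w s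
  refine ⟨s.left ≫ pullback.snd y f, ⟨by simp [reassoc_of% hls, pullback.lift_snd], ?_⟩,
    fun d hd => ?_⟩
  · simp [← pullback.condition, reassoc_of% hsf]
  · have hsd :
        Over.homMk (pullback.lift (𝟙 B) d (by simp [hd.2])) (pullback.lift_fst _ _ _) = s :=
      (h _ hP).1 (Over.OverMorphism.ext (pullback.hom_ext
        (by simp [reassoc_of% hls, pullback.lift_fst])
        (by simp [reassoc_of% hls, pullback.lift_snd, hd.1])))
    simpa [pullback.lift_snd] using congrArg (fun t => t.left ≫ pullback.snd y f) hsd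

lemma mem_L_of_isREquiv {A B : E} {u : A ⟶ B} (hu : IsREquiv S u) : S.L u := by
  apply S.mem_L_of_isLocal_homMk
  let adj := Over.mapPullbackAdj u
  have hε : (S.rSlice B).isLocal (adj.counit.app (Over.mk (𝟙 B))) := fun P hP =>
    (adj.bijective_map_iff_bijective_counit_comp _ _).1 (hu.1 _ _ (S.R.id_mem B) hP)
  -- The counit at `𝟙 B` is `u`, up to `A ≅ B ×_B A`.
  let e : Over.mk u ≅ (Over.map u).obj ((Over.pullback u).obj (Over.mk (𝟙 B))) :=
    Over.isoMk (asIso (pullback.snd (𝟙 B) u)).symm (by simp)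
  have he : Over.homMk u = e.hom ≫ adj.counit.app _ := by
    ext
    simp [e, adj]
  rw [he]
  exact (S.rSlice B).isLocal.comp_mem _ _ (ObjectProperty.isLocal_of_isIso _ _) hε

lemma mem_L_of_section_of_isREquiv {K A : E} {v : K ⟶ A} (hv : IsREquiv S v) {j : A ⟶ K}
    (hjv : j ≫ v = 𝟙 A) : S.L j := by
  apply S.mem_L_of_isLocal_homMk
  intro P hP
  obtain ⟨Q, hQ, ⟨e⟩⟩ := hv.2 P hP
  rw [← e.bijective_precomp_iff,
    (Over.mapPullbackAdj v).bijective_comp_iff_bijective_map_comp]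
  -- `Over.map v` turns `j` into a section of `Over.homMk v`, which is `R[A]`-local as `v ∈ L`.
  let i : Over.mk j ⟶ Over.mk (𝟙 K) := Over.homMk j (by simp)
  let w : (Over.map v).obj (Over.mk (𝟙 K)) ⟶ Over.mk (𝟙 A) := Over.homMk v (by simp)
  have : IsIso ((Over.map v).map i ≫ w) := by
    have : IsIso ((Over.forget A).map ((Over.map v).map i ≫ w)) := by
      simp only [Over.forget_map, Over.comp_left, Over.map_map_left, Over.homMk_left, i, w, hjv]
      exact IsIso.id A
    exact isIso_of_reflects_iso _ (Over.forget A)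
  exact (S.rSlice A).isLocal.of_postcomp _ w
    (S.isLocal_rSlice_of_mem_L (S.mem_L_of_isREquiv hv)) (ObjectProperty.isLocal_of_isIso _ _) Q hQ

variable [S.L.IsStableUnderBaseChange]

lemma exists_pullback_iso_of_diagonal_mem_L {A B : E} {u : A ⟶ B} (hΔ : S.L (pullback.diagonal u))
    (X : Over A) (hX : S.R X.hom) :
    ∃ Y : Over B, S.R Y.hom ∧ Nonempty ((Over.pullback u).obj Y ≅ X) := by
  obtain ⟨Z, l, r, hl, hr, hlr⟩ := S.fac (X.hom ≫ u)
  -- `X` is `u* r` once the comparison map `c` is shown to be both in `L` and in `R`.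
  let c : X.left ⟶ pullback r u := pullback.lift l X.hom hlr
  have hcR : S.R c := S.R.of_postcomp c (pullback.snd r u) (S.R.pullback_snd r u hr)
    (by simpa [c, pullback.lift_snd] using hX)
  have : S.L.HasOfPostcompProperty S.L.diagonal :=
    MorphismProperty.hasOfPostcompProperty_iff_le_diagonal.2 le_rfl
  have hcL : S.L c := S.L.of_postcomp c (pullback.fst r u) (S.L.diagonal.pullback_fst r u hΔ)
    (by simpa [c, pullback.lift_fst])
  have := S.isIso_of_mem_L_of_mem_R hcL hcR
  exact ⟨Over.mk r, hr, ⟨(Over.isoMk (asIso c) (pullback.lift_snd _ _ _)).symm⟩⟩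

lemma isREquiv_of_mem_L {A B : E} {u : A ⟶ B} (hu : S.L u) (hΔ : S.L (pullback.diagonal u)) :
    IsREquiv S u :=
  ⟨fun Y Y' _ hY' => ((Over.mapPullbackAdj u).bijective_map_iff_bijective_counit_comp Y Y').2
    (S.isLocal_rSlice_of_mem_L (by simpa using S.L.pullback_fst _ _ hu) Y' hY'),
   S.exists_pullback_iso_of_diagonal_mem_L hΔ⟩

end FactorizationSystem

/-- for a modality `(L, R)` in a category with finite limits, a map
`u : A ⟶ B` is a fiberwise `R`-equivalence (every base change of `u` is an
`R`-equivalence) if and only if both `u` and its diagonal `Δ(u)` belong to `L`. -/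
theorem fiberwise_REquiv_iff (S : FactorizationSystem E)
    (hmod : StableUnderBaseChange' S.L) {A B : E} (u : A ⟶ B) :
    (∀ ⦃A' B' : E⦄ (p : A' ⟶ A) (u' : A' ⟶ B') (q : B' ⟶ B),
      IsPullback p u' u q → IsREquiv S u') ↔
    (S.L u ∧ S.L (pullback.diagonal u)) := by
  have : S.L.IsStableUnderBaseChange := ⟨fun sq hg => hmod _ _ _ _ sq hg⟩
  constructor
  · intro h
    exact ⟨S.mem_L_of_isREquiv (h (𝟙 A) u (𝟙 B) IsPullback.of_id_fst),
      S.mem_L_of_section_of_isREquiv (h _ _ _ (IsPullback.of_hasPullback u u))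
        (pullback.diagonal_snd u)⟩
  · rintro ⟨hu, hΔ⟩ A' B' p u' q hpb
    exact S.isREquiv_of_mem_L (S.L.of_isPullback hpb hu) (MorphismProperty.diagonal_iff.1
      (S.L.diagonal.of_isPullback hpb (MorphismProperty.diagonal_iff.2 hΔ)))

end Paper
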